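/- Suppose Σ_{k=0}^L r_k·m_k = 1 in R, and define the chain homotopy Θ_n : K_n(X) → K_{n+1}(X × I) by Θ_n(T) = Σ_{k=0}^L r_k·(ξ_n(T) − ψ_{n,k}(T)), where ξ_n(T)(x₁,…,x_{n+1}) = (T(x₁,…,x_n), 0) and ψ_{n,k}(T)(x₁,…,x_{n+1}) = (T(x₁,…,x_n), χ_k(x_{n+1})). Then for all n ≥ 0 and all continuous T : Iⁿ → X: (∂_{n+1} ∘ Θ_n)(T) = (-1)^{n+2}·(e₀(T) − e₁(T)) + (Θ_{n-1} ∘ ∂_n)(T), where e_i(T) = e_i ∘ T and Θ_{-1} = 0. -/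

import Mathlib

open scoped BigOperators

noncomputable section

/-- The `n`-dimensional unit cube. -/
abbrev Cube (n : ℕ) : Type := Fin n → unitInterval

/-- The point `i/L` of the unit interval, for `i ∈ {0,…,L}`. -/
def vertexVal (L : ℕ) (i : Fin (L + 1)) : unitInterval :=
  ⟨(i : ℝ) / L, ⟨by positivity,
    div_le_one_of_le₀ (by exact_mod_cast Fin.is_le i) (Nat.cast_nonneg L)⟩⟩

/-- Insertion of the constant `c` at the `j`-th coordinate. -/
def faceMap {n : ℕ} (j : Fin (n + 1)) (c : unitInterval) : C(Cube n, Cube (n + 1)) :=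
  ⟨fun x => j.insertNth c x, (continuous_const : Continuous fun _ : Cube n => c).finInsertNth j continuous_id⟩

/-- The face `⟨T⟩_{n,·,j}` of a singular cube at value `c` in direction `j`. -/
def face {X : Type} [TopologicalSpace X] {n : ℕ} (T : C(Cube (n + 1), X)) (j : Fin (n + 1))
    (c : unitInterval) : C(Cube n, X) :=
  T.comp (faceMap j c)

/-- The module of cubical `n`-chains: the free `R`-module on the continuous maps `Iⁿ → X`. -/
abbrev Kmod (R : Type) [CommRing R] (X : Type) [TopologicalSpace X] (n : ℕ) : Type :=
  C(Cube n, X) →₀ R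

/-- The weighted boundary operator. -/
def bdry (R : Type) [CommRing R] {L : ℕ} (m : Fin (L + 1) → R) (X : Type) [TopologicalSpace X]
    (n : ℕ) : Kmod R X (n + 1) →ₗ[R] Kmod R X n :=
  Finsupp.lift (Kmod R X n) R C(Cube (n + 1), X) fun T =>
    ∑ j : Fin (n + 1), ∑ i : Fin (L + 1),
      ((-1 : R) ^ (j : ℕ) * m i) • Finsupp.single (face T j (vertexVal L i)) (1 : R)

/-- The piecewise-linear "jag" function `χ_k` of height `1` at `k/L`. -/
def chi (L k : ℕ) (x : ℝ) : ℝ :=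
  if k = 0 then max (1 - L * x) 0
  else if k = L then max (L * x - L + 1) 0
  else if x ≤ (k : ℝ) / L then max (L * x - k + 1) 0 else max (1 - L * x + k) 0

theorem chi_continuous (L k : ℕ) (hk : k ≤ L) : Continuous (chi L k) := by
  unfold chi
  rcases eq_or_ne k 0 with h0 | h0
  · simp only [if_pos h0]
    fun_prop
  rcases eq_or_ne k L with hL | hL
  · simp only [if_neg h0, if_pos hL]
    fun_prop
  · simp only [if_neg h0, if_neg hL]
    have hLpos : 0 < L := by omega
    have hL0 : (L : ℝ) ≠ 0 := by exact_mod_cast hLpos.ne'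
    apply Continuous.if_le (by fun_prop) (by fun_prop) continuous_id continuous_const
    intro x hx
    simp only [id] at hx
    subst hx
    have h1 : (L : ℝ) * ((k : ℝ) / L) = k := by field_simp
    rw [h1]
    ring_nf

/-- `χ_k` as a map of the unit interval to itself (its values on `[0,1]` lie in `[0,1]`,
and `Set.projIcc` records this). -/
def chiI (L k : ℕ) (hk : k ≤ L) : C(unitInterval, unitInterval) :=
  ⟨fun t => Set.projIcc (0 : ℝ) 1 zero_le_one (chi L k (t : ℝ)),
    continuous_projIcc.comp ((chi_continuous L k hk).comp continuous_subtype_val)⟩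

/-- `ξ_n(T)(x₁,…,x_{n+1}) = (T(x₁,…,x_n), 0)`. -/
def xiT {X : Type} [TopologicalSpace X] {n : ℕ} (T : C(Cube n, X)) :
    C(Cube (n + 1), X × unitInterval) :=
  ⟨fun x => (T (Fin.init x), 0), by
    exact (T.continuous.comp
      (continuous_pi fun i : Fin n => continuous_apply i.castSucc)).prodMk continuous_const⟩

/-- `ψ_{n,k}(T)(x₁,…,x_{n+1}) = (T(x₁,…,x_n), χ_k(x_{n+1}))`. -/
def psiT (L : ℕ) {X : Type} [TopologicalSpace X] {n : ℕ} (k : Fin (L + 1)) (T : C(Cube n, X)) :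
    C(Cube (n + 1), X × unitInterval) :=
  ⟨fun x => (T (Fin.init x), chiI L k (Fin.is_le k) (x (Fin.last n))), by
    exact (T.continuous.comp
      (continuous_pi fun i : Fin n => continuous_apply i.castSucc)).prodMk
      ((chiI L k (Fin.is_le k)).continuous.comp (continuous_apply (Fin.last n)))⟩

/-- The chain homotopy `Θ_n(T) = Σ_k r_k · (ξ_n(T) − ψ_{n,k}(T))`. -/
def Theta (R : Type) [CommRing R] (L : ℕ) (r : Fin (L + 1) → R) (X : Type)
    [TopologicalSpace X] (n : ℕ) : Kmod R X n →ₗ[R] Kmod R (X × unitInterval) (n + 1) :=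
  Finsupp.lift (Kmod R (X × unitInterval) (n + 1)) R C(Cube n, X) fun T =>
    ∑ k : Fin (L + 1), r k • (Finsupp.single (xiT T) (1 : R) - Finsupp.single (psiT L k T) (1 : R))

/-- The chain map induced by a continuous map `f : X → Y`. -/
def chainMap (R : Type) [CommRing R] {X Y : Type} [TopologicalSpace X] [TopologicalSpace Y]
    (f : C(X, Y)) (n : ℕ) : Kmod R X n →ₗ[R] Kmod R Y n :=
  Finsupp.lift (Kmod R Y n) R C(Cube n, X) fun T => Finsupp.single (f.comp T) (1 : R)

/-- The inclusion `x ↦ (x, t)` of `X` into `X × I`. -/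
def epsMap (X : Type) [TopologicalSpace X] (t : unitInterval) : C(X, X × unitInterval) :=
  ⟨fun x => (x, t), continuous_id.prodMk continuous_const⟩

/-! In the first `n` directions the faces of `ξ_n(T)` and `ψ_{n,k}(T)` are `ξ_{n-1}` and
`ψ_{n-1,k}` of the faces of `T`, which produces `Θ_{n-1}(∂_n T)`. In the last direction every
face of `ξ_n(T)` is `e₀ ∘ T`, while, since `χ_k(i/L) = δ_{ik}`, the face of `ψ_{n,k}(T)` at `i/L`
is `e₁ ∘ T` for `i = k` and `e₀ ∘ T` otherwise. The `m`-weighted faces of `ξ_n(T) − ψ_{n,k}(T)`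
therefore add up to `m_k (e₀ ∘ T − e₁ ∘ T)`, and `Σ r_k m_k = 1` turns the `r`-weighted total
into `e₀ ∘ T − e₁ ∘ T`. -/

theorem Fin.insertNth_castSucc_eq_snoc {n : ℕ} {β : Type*} (j : Fin (n + 1)) (c : β)
    (x : Fin (n + 1) → β) :
    Fin.insertNth (α := fun _ => β) j.castSucc c x
      = Fin.snoc (Fin.insertNth (α := fun _ => β) j c (Fin.init x)) (x (Fin.last n)) := by
  rw [Fin.insertNth_eq_iff, Fin.snoc_castSucc, Fin.insertNth_apply_same]
  refine ⟨rfl, funext fun i => ?_⟩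
  induction i using Fin.lastCases with
  | last => rw [Fin.removeNth, Fin.succAbove_castSucc_of_le _ _ (Fin.le_last j), Fin.succ_last,
      Fin.snoc_last]
  | cast i => rw [Fin.removeNth, Fin.castSucc_succAbove_castSucc, Fin.snoc_castSucc,
      Fin.insertNth_apply_succAbove]; rfl

section Faces

variable {X : Type} [TopologicalSpace X] {n : ℕ}

lemma face_xiT_last (T : C(Cube n, X)) (c : unitInterval) :
    face (xiT T) (Fin.last n) c = (epsMap X 0).comp T := by
  ext x <;> simp [face, faceMap, xiT, epsMap, Fin.insertNth_last', Fin.init_snoc]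

lemma face_psiT_last {L : ℕ} (k : Fin (L + 1)) (T : C(Cube n, X)) (c : unitInterval) :
    face (psiT L k T) (Fin.last n) c = (epsMap X (chiI L k k.is_le c)).comp T := by
  ext x <;> simp [face, faceMap, psiT, epsMap, Fin.insertNth_last', Fin.init_snoc]

lemma face_xiT_castSucc (T : C(Cube (n + 1), X)) (j : Fin (n + 1)) (c : unitInterval) :
    face (xiT T) j.castSucc c = xiT (face T j c) := by
  ext x <;> simp [face, faceMap, xiT, Fin.insertNth_castSucc_eq_snoc, Fin.init_snoc]

lemma face_psiT_castSucc {L : ℕ} (k : Fin (L + 1)) (T : C(Cube (n + 1), X)) (j : Fin (n + 1))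
    (c : unitInterval) :
    face (psiT L k T) j.castSucc c = psiT L k (face T j c) := by
  ext x <;> simp [face, faceMap, psiT, Fin.insertNth_castSucc_eq_snoc, Fin.init_snoc]

end Faces

lemma chi_eq_max_one_sub_abs {L k : ℕ} (hk : k ≤ L) {x : ℝ} (hx : x ∈ Set.Icc (0 : ℝ) 1) :
    chi L k x = max (1 - |L * x - k|) 0 := by
  obtain ⟨hx0, hx1⟩ := hx
  have hLx : L * x ≤ L := by nlinarith [(Nat.cast_nonneg L : (0 : ℝ) ≤ L)]
  unfold chi
  split_ifs with h0 hL hxk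
  · subst h0
    rw [Nat.cast_zero, sub_zero, abs_of_nonneg (by positivity)]
  · subst hL
    rw [abs_of_nonpos (by linarith)]
    ring_nf
  · have hLpos : (0 : ℝ) < L := by exact_mod_cast (show 0 < L by omega)
    rw [le_div_iff₀ hLpos, mul_comm] at hxk
    rw [abs_of_nonpos (by linarith)]
    ring_nf
  · have hLpos : (0 : ℝ) < L := by exact_mod_cast (show 0 < L by omega)
    rw [not_le, div_lt_iff₀ hLpos, mul_comm] at hxk
    rw [abs_of_pos (by linarith)]
    ring_nf

lemma max_one_sub_abs_natCast_sub (i k : ℕ) :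
    max (1 - |(i : ℝ) - k|) 0 = if i = k then 1 else 0 := by
  split_ifs with h
  · simp [h]
  · have hik : (1 : ℝ) ≤ |(i : ℝ) - k| := by
      exact_mod_cast Int.one_le_abs (sub_ne_zero.mpr (by exact_mod_cast h : (i : ℤ) ≠ k))
    exact max_eq_right (by linarith)

lemma chiI_vertexVal {L : ℕ} (k i : Fin (L + 1)) :
    chiI L k k.is_le (vertexVal L i) = if i = k then 1 else 0 := by
  have hvertex : L * (vertexVal L i : ℝ) = i := by
    rcases Nat.eq_zero_or_pos L with hL | hL
    · subst hL
      simp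
    · show (L : ℝ) * ((i : ℝ) / L) = i
      field_simp
  apply Subtype.ext
  simp only [chiI, ContinuousMap.coe_mk, Set.coe_projIcc,
    chi_eq_max_one_sub_abs k.is_le (vertexVal L i).2, hvertex, max_one_sub_abs_natCast_sub,
    Fin.val_eq_val]
  split_ifs <;> simp

section Chains

open Finsupp

variable {R : Type} [CommRing R] {L : ℕ} {X Y : Type} [TopologicalSpace X] [TopologicalSpace Y]

lemma bdry_single (m : Fin (L + 1) → R) (n : ℕ) (S : C(Cube (n + 1), X)) :
    bdry R m X n (single S 1) =
      ∑ j : Fin (n + 1), ∑ i : Fin (L + 1),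
        ((-1 : R) ^ (j : ℕ) * m i) • single (face S j (vertexVal L i)) (1 : R) := by
  rw [bdry, lift_apply, sum_single_index (by simp), one_smul]

lemma Theta_single (r : Fin (L + 1) → R) (n : ℕ) (T : C(Cube n, X)) :
    Theta R L r X n (single T 1) =
      ∑ k : Fin (L + 1), r k • (single (xiT T) (1 : R) - single (psiT L k T) 1) := by
  rw [Theta, lift_apply, sum_single_index (by simp), one_smul]

lemma chainMap_single (f : C(X, Y)) (n : ℕ) (T : C(Cube n, X)) :
    chainMap R f n (single T 1) = single (f.comp T) (1 : R) := by
  rw [chainMap, lift_apply, sum_single_index (by simp), one_smul]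

lemma bdry_single_eq_sum_castSucc_add_last (m : Fin (L + 1) → R) (n : ℕ)
    (S : C(Cube (n + 1), X)) :
    bdry R m X n (single S 1) =
      ∑ j : Fin n, ∑ i : Fin (L + 1),
          ((-1 : R) ^ (j : ℕ) * m i) • single (face S j.castSucc (vertexVal L i)) (1 : R) +
        ∑ i : Fin (L + 1),
          ((-1 : R) ^ n * m i) • single (face S (Fin.last n) (vertexVal L i)) (1 : R) := by
  rw [bdry_single, Fin.sum_univ_castSucc]
  simp only [Fin.val_castSucc, Fin.val_last]

lemma sum_smul_sum_smul_sub_ite {M : Type*} [AddCommGroup M] [Module R M]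
    {m r : Fin (L + 1) → R} (hr : ∑ k, r k * m k = 1) (f : unitInterval → M) (s : R) :
    ∑ k : Fin (L + 1), r k • ∑ i : Fin (L + 1), (s * m i) • (f 0 - f (if i = k then 1 else 0)) =
      s • (f 0 - f 1) := by
  have hinner : ∀ k : Fin (L + 1),
      ∑ i : Fin (L + 1), (s * m i) • (f 0 - f (if i = k then 1 else 0)) =
        (s * m k) • (f 0 - f 1) := by
    intro k
    rw [Fintype.sum_eq_single k fun i hik => by rw [if_neg hik, sub_self, smul_zero], if_pos rfl]
  simp only [hinner, smul_smul, ← Finset.sum_smul]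
  congr 1
  calc ∑ k, r k * (s * m k) = s * ∑ k, r k * m k := by
        rw [Finset.mul_sum]; exact Finset.sum_congr rfl fun k _ => by ring
    _ = s := by rw [hr, mul_one]

lemma bdry_Theta_single {m r : Fin (L + 1) → R} (hr : ∑ k, r k * m k = 1) (n : ℕ)
    (T : C(Cube n, X)) :
    bdry R m (X × unitInterval) n (Theta R L r X n (single T 1)) =
      (-1 : R) ^ n • (single ((epsMap X 0).comp T) 1 - single ((epsMap X 1).comp T) 1) +
      ∑ k : Fin (L + 1), r k • ∑ j : Fin n, ∑ i : Fin (L + 1), ((-1 : R) ^ (j : ℕ) * m i) •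
        (single (face (xiT T) j.castSucc (vertexVal L i)) 1 -
          single (face (psiT L k T) j.castSucc (vertexVal L i)) 1) := by
  rw [Theta_single, map_sum]
  simp only [map_smul, map_sub, bdry_single_eq_sum_castSucc_add_last, face_xiT_last,
    face_psiT_last, chiI_vertexVal, add_sub_add_comm, ← Finset.sum_sub_distrib, ← smul_sub,
    smul_add, Finset.sum_add_distrib]
  rw [sum_smul_sum_smul_sub_ite hr (fun t => single ((epsMap X t).comp T) (1 : R)), add_comm]

lemma Theta_bdry_single (m r : Fin (L + 1) → R) (n : ℕ) (T : C(Cube (n + 1), X)) :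
    Theta R L r X n (bdry R m X n (single T 1)) =
      ∑ k : Fin (L + 1), r k • ∑ j : Fin (n + 1), ∑ i : Fin (L + 1), ((-1 : R) ^ (j : ℕ) * m i) •
        (single (face (xiT T) j.castSucc (vertexVal L i)) 1 -
          single (face (psiT L k T) j.castSucc (vertexVal L i)) 1) := by
  simp only [face_xiT_castSucc, face_psiT_castSucc, bdry_single, map_sum, map_smul,
    Theta_single, Finset.smul_sum, smul_smul]
  refine (Finset.sum_congr rfl fun j _ => Finset.sum_comm).trans ?_
  rw [Finset.sum_comm]
  exact Finset.sum_congr rfl fun k _ => Finset.sum_congr rfl fun j _ =>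
    Finset.sum_congr rfl fun i _ => by rw [mul_comm]

end Chains

/-- If `Σ r_k·m_k = 1` then `Θ` is a chain homotopy between `e₀` and `e₁`:
`∂_{n+1} ∘ Θ_n = (-1)^{n+2}(e₀ − e₁) + Θ_{n-1} ∘ ∂_n` on every singular cube `T`
(with `Θ_{-1} = 0`, so in degree `0` the last term is absent). -/
theorem chain_homotopy_formula (R : Type) [CommRing R] (L : ℕ) (m r : Fin (L + 1) → R)
    (hr : ∑ k, r k * m k = 1) (X : Type) [TopologicalSpace X] :
    (∀ T : C(Cube 0, X),
      bdry R m (X × unitInterval) 0 (Theta R L r X 0 (Finsupp.single T 1))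
        = ((-1 : R) ^ (0 + 2)) •
            (chainMap R (epsMap X 0) 0 (Finsupp.single T 1)
              - chainMap R (epsMap X 1) 0 (Finsupp.single T 1))) ∧
    (∀ (n : ℕ) (T : C(Cube (n + 1), X)),
      bdry R m (X × unitInterval) (n + 1) (Theta R L r X (n + 1) (Finsupp.single T 1))
        = ((-1 : R) ^ (n + 1 + 2)) •
            (chainMap R (epsMap X 0) (n + 1) (Finsupp.single T 1)
              - chainMap R (epsMap X 1) (n + 1) (Finsupp.single T 1))
          + Theta R L r X n (bdry R m X n (Finsupp.single T 1))) := by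
  refine ⟨fun T => ?_, fun n T => ?_⟩
  · simp [bdry_Theta_single hr, chainMap_single]
  · rw [bdry_Theta_single hr, Theta_bdry_single, chainMap_single, chainMap_single,
      show (-1 : R) ^ (n + 1 + 2) = (-1) ^ (n + 1) by ring]
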